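/- Let A be a real n×n matrix, q ∈ ℝ, Ã_{ij} = (A_{ij}+A_{ji})/2, Θ^{(q)}_{ij} = 2πq(A_{ij}-A_{ji}), D̃ the diagonal matrix with D̃_{ii} = (1/2)Σ_j(|A_{ij}|+|A_{ji}|), and H^{(q)}_{ij} = Ã_{ij}·exp(i·Θ^{(q)}_{ij}). Then the unnormalized magnetic signed Laplacian L_U^{(q)} = D̃ - H^{(q)} is positive semidefinite: for every x ∈ ℂ^n, the quantity x† L_U^{(q)} x is real and nonnegative. -/

import Mathlib

open Complex Matrix BigOperators
open scoped ComplexOrder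

noncomputable def Hmat {n : ℕ} (q : ℝ) (A : Matrix (Fin n) (Fin n) ℝ) :
    Matrix (Fin n) (Fin n) ℂ := fun i j =>
  (((A i j + A j i) / 2 : ℝ) : ℂ) *
    Complex.exp (Complex.I * ((2 * Real.pi * q * (A i j - A j i) : ℝ) : ℂ))

noncomputable def dtilde {n : ℕ} (A : Matrix (Fin n) (Fin n) ℝ) : Fin n → ℝ :=
  fun i => (1 / 2) * ∑ j, (|A i j| + |A j i|)

noncomputable def Dmat {n : ℕ} (A : Matrix (Fin n) (Fin n) ℝ) :
    Matrix (Fin n) (Fin n) ℂ :=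
  Matrix.diagonal fun i => ((dtilde A i : ℝ) : ℂ)

noncomputable def LU {n : ℕ} (q : ℝ) (A : Matrix (Fin n) (Fin n) ℝ) :
    Matrix (Fin n) (Fin n) ℂ := Dmat A - Hmat q A

noncomputable def Dhalf {n : ℕ} (A : Matrix (Fin n) (Fin n) ℝ) :
    Matrix (Fin n) (Fin n) ℂ :=
  Matrix.diagonal fun i => (((Real.sqrt (dtilde A i))⁻¹ : ℝ) : ℂ)

noncomputable def LN {n : ℕ} (q : ℝ) (A : Matrix (Fin n) (Fin n) ℝ) :
    Matrix (Fin n) (Fin n) ℂ := 1 - Dhalf A * Hmat q A * Dhalf A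


lemma Hmat_abs {n : ℕ} (q : ℝ) (A : Matrix (Fin n) (Fin n) ℝ) (i j : Fin n) :
    ‖Hmat q A i j‖ = |(A i j + A j i) / 2| := by
  have h0 : (Complex.I * ((2 * Real.pi * q * (A i j - A j i) : ℝ) : ℂ)).re = 0 := by simp
  rw [show Hmat q A i j = (((A i j + A j i) / 2 : ℝ) : ℂ) *
      Complex.exp (Complex.I * ((2 * Real.pi * q * (A i j - A j i) : ℝ) : ℂ)) from rfl,
    norm_mul, Complex.norm_real, Real.norm_eq_abs, Complex.norm_exp, h0, Real.exp_zero, mul_one]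

lemma Hmat_herm {n : ℕ} (q : ℝ) (A : Matrix (Fin n) (Fin n) ℝ) :
    (Hmat q A).IsHermitian := by
  ext i j
  simp only [conjTranspose_apply, Complex.star_def]
  have e1 : (starRingEnd ℂ) (((A j i + A i j) / 2 : ℝ) : ℂ) = (((A i j + A j i) / 2 : ℝ) : ℂ) := by
    rw [Complex.conj_ofReal]; norm_cast; ring
  have e2 : (starRingEnd ℂ) (Complex.exp (Complex.I * ((2 * Real.pi * q * (A j i - A i j) : ℝ) : ℂ)))
      = Complex.exp (Complex.I * ((2 * Real.pi * q * (A i j - A j i) : ℝ) : ℂ)) := by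
    rw [← Complex.exp_conj]
    congr 1
    rw [_root_.map_mul, Complex.conj_I, Complex.conj_ofReal]
    push_cast; ring
  calc (starRingEnd ℂ) (Hmat q A j i)
      = (starRingEnd ℂ) (((A j i + A i j) / 2 : ℝ) : ℂ) *
        (starRingEnd ℂ) (Complex.exp (Complex.I * ((2 * Real.pi * q * (A j i - A i j) : ℝ) : ℂ))) :=
        _root_.map_mul _ _ _
    _ = Hmat q A i j := by rw [e1, e2]; rfl

lemma LU_herm {n : ℕ} (q : ℝ) (A : Matrix (Fin n) (Fin n) ℝ) :
    (LU q A).IsHermitian := by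
  refine IsHermitian.sub ?_ (Hmat_herm q A)
  exact Matrix.isHermitian_diagonal_of_self_adjoint _
    (funext fun i => Complex.conj_ofReal _)

theorem unnormalized_magnetic_signed_laplacian_posSemidef
    (n : ℕ) (q : ℝ) (A : Matrix (Fin n) (Fin n) ℝ) :
    (LU q A).PosSemidef := by
  refine .of_dotProduct_mulVec_nonneg (LU_herm q A) fun x => ?_
  have hL := LU_herm q A
  set a : Fin n → ℝ := fun i => ‖x i‖ with ha
  set z := star x ⬝ᵥ (LU q A) *ᵥ x with hzdef
  have hsz : star z = z := by
    rw [hzdef, ← star_dotProduct_star, star_star, star_mulVec, hL.eq, dotProduct_mulVec]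
  have him : z.im = 0 := by
    have h := hsz
    rw [Complex.star_def, Complex.conj_eq_iff_im] at h
    exact h
  set S : ℂ := ∑ i, ∑ j, (starRingEnd ℂ) (x i) * (Hmat q A i j * x j) with hS
  have hz : z = (∑ i, ((dtilde A i : ℂ) * ((starRingEnd ℂ) (x i) * x i))) - S := by
    rw [hzdef, LU, sub_mulVec, dotProduct_sub]
    congr 1
    · refine Finset.sum_congr rfl fun i _ => ?_
      simp only [Dmat, mulVec_diagonal, Pi.star_apply, Complex.star_def]
      ring
    · rw [hS]
      refine Finset.sum_congr rfl fun i _ => ?_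
      simp only [mulVec, dotProduct, Pi.star_apply, Complex.star_def, Finset.mul_sum]
  have hre : z.re = (∑ i, dtilde A i * Complex.normSq (x i)) - S.re := by
    rw [hz, Complex.sub_re, Complex.re_sum]
    congr 1
    refine Finset.sum_congr rfl fun i _ => ?_
    rw [mul_comm ((starRingEnd ℂ) (x i)), Complex.mul_conj, ← Complex.ofReal_mul,
      Complex.ofReal_re]
  have hsymm : (∑ i, ∑ j, |(A i j + A j i) / 2| * (a j) ^ 2)
      = ∑ i, ∑ j, |(A i j + A j i) / 2| * (a i) ^ 2 := by
    rw [Finset.sum_comm]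
    refine Finset.sum_congr rfl fun j _ => Finset.sum_congr rfl fun i _ => ?_
    rw [add_comm (A i j)]
  have habs : ‖S‖ ≤ ∑ i, dtilde A i * Complex.normSq (x i) := by
    calc ‖S‖
        ≤ ∑ i, ∑ j, ‖(starRingEnd ℂ) (x i) * (Hmat q A i j * x j)‖ := by
          refine (norm_sum_le _ _).trans ?_
          exact Finset.sum_le_sum fun i _ => norm_sum_le _ _
      _ = ∑ i, ∑ j, a i * (|(A i j + A j i) / 2| * a j) := by
          refine Finset.sum_congr rfl fun i _ => Finset.sum_congr rfl fun j _ => ?_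
          rw [norm_mul, norm_mul, Hmat_abs, Complex.norm_conj]
      _ ≤ ∑ i, ∑ j, |(A i j + A j i) / 2| * ((a i) ^ 2 + (a j) ^ 2) / 2 := by
          refine Finset.sum_le_sum fun i _ => Finset.sum_le_sum fun j _ => ?_
          have h2 : a i * a j ≤ ((a i) ^ 2 + (a j) ^ 2) / 2 := by
            nlinarith [sq_nonneg (a i - a j)]
          have hb : (0:ℝ) ≤ |(A i j + A j i) / 2| := abs_nonneg _
          calc a i * (|(A i j + A j i) / 2| * a j)
              = |(A i j + A j i) / 2| * (a i * a j) := by ring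
            _ ≤ |(A i j + A j i) / 2| * (((a i) ^ 2 + (a j) ^ 2) / 2) :=
                mul_le_mul_of_nonneg_left h2 hb
            _ = |(A i j + A j i) / 2| * ((a i) ^ 2 + (a j) ^ 2) / 2 := by ring
      _ = (∑ i, ∑ j, |(A i j + A j i) / 2| * (a i) ^ 2
            + ∑ i, ∑ j, |(A i j + A j i) / 2| * (a j) ^ 2) / 2 := by
          rw [← Finset.sum_add_distrib, Finset.sum_div]
          refine Finset.sum_congr rfl fun i _ => ?_
          rw [← Finset.sum_add_distrib, Finset.sum_div]
          refine Finset.sum_congr rfl fun j _ => ?_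
          ring
      _ = ∑ i, ∑ j, |(A i j + A j i) / 2| * (a i) ^ 2 := by
          rw [hsymm]; ring
      _ ≤ ∑ i, dtilde A i * Complex.normSq (x i) := by
          refine Finset.sum_le_sum fun i _ => ?_
          rw [← Finset.sum_mul, ← Complex.sq_norm]
          refine mul_le_mul_of_nonneg_right ?_ (sq_nonneg _)
          have hd : dtilde A i = ∑ j, (|A i j| + |A j i|) / 2 := by
            simp only [dtilde, Finset.mul_sum]
            exact Finset.sum_congr rfl fun j _ => by ring
          rw [hd]
          refine Finset.sum_le_sum fun j _ => ?_
          rw [abs_div, _root_.abs_two]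
          gcongr
          exact abs_add_le _ _
  have hSre : S.re ≤ ∑ i, dtilde A i * Complex.normSq (x i) :=
    (Complex.re_le_norm S).trans habs
  rw [Complex.le_def]
  refine ⟨?_, ?_⟩
  · rw [Complex.zero_re, hre]; linarith
  · rw [Complex.zero_im, him]
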